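/- For N = 2 and any centered bivariate Gaussian G, Cov(log S_2(G), p_1(G) p_2(G)) ≤ 0, where S_2(x) = e^{β x_1} + e^{β x_2} and p_i(x) = e^{β x_i}/S_2(x), for every β > 0. -/

import Mathlib

open MeasureTheory ProbabilityTheory Matrix Real

/-- The standard Gaussian measure on `ι → ℝ` (i.i.d. standard normals). -/
noncomputable def stdGaussian (ι : Type*) [Fintype ι] : Measure (ι → ℝ) :=
  Measure.pi fun _ => gaussianReal 0 1

/-- `μ` is the centered Gaussian measure on `ι → ℝ` with covariance matrix `C`:
it is the law of `A g` for `g` standard Gaussian and any matrix `A` with `A Aᵀ = C`. -/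
def IsCenteredGaussian {ι : Type*} [Fintype ι] (C : Matrix ι ι ℝ)
    (μ : Measure (ι → ℝ)) : Prop :=
  ∃ A : Matrix ι ι ℝ, A * A.transpose = C ∧ μ = (stdGaussian ι).map A.mulVec

/-- Expectation of `f` under `μ`. -/
noncomputable def expec {α : Type*} [MeasurableSpace α] (μ : Measure α) (f : α → ℝ) : ℝ :=
  ∫ x, f x ∂μ

/-- Covariance of `f` and `g` under `μ`. -/
noncomputable def covar {α : Type*} [MeasurableSpace α] (μ : Measure α) (f g : α → ℝ) : ℝ :=
  expec μ (fun x => f x * g x) - expec μ f * expec μ g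

/-- Variance of `f` under `μ`. -/
noncomputable def variance' {α : Type*} [MeasurableSpace α] (μ : Measure α) (f : α → ℝ) : ℝ :=
  covar μ f f

noncomputable def S {N : ℕ} (β : ℝ) (x : Fin N → ℝ) : ℝ :=
  ∑ i, Real.exp (β * x i)

noncomputable def p {N : ℕ} (β : ℝ) (i : Fin N) (x : Fin N → ℝ) : ℝ :=
  Real.exp (β * x i) / S β x

/-!
A centered Gaussian law is invariant under `x ↦ -x`, and `p₁ p₂ (x) = 1 / (S(x) S(-x))` is even,
so the odd part of `log S` does not contribute to the covariance: it equals `Cov(K, e^{-2K})` with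
`K(x) = (log S(x) + log S(-x)) / 2`, which is `≤ 0` by Chebyshev's association inequality since
`t ↦ e^{-2t}` is decreasing. Integrability comes from `|log S(x)| ≤ |β| ‖x‖ + log 2` and the
finite first moment of a Gaussian measure.
-/

instance isNegInvariant_gaussianReal_zero (v : NNReal) : (gaussianReal 0 v).IsNegInvariant :=
  ⟨by rw [Measure.neg_def]; simpa using gaussianReal_map_neg (μ := 0) (v := v)⟩

lemma isNegInvariant_map {E F : Type*} [MeasurableSpace E] [MeasurableSpace F] [Neg E] [Neg F]
    [MeasurableNeg E] [MeasurableNeg F] {μ : Measure E} [μ.IsNegInvariant] {f : E → F}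
    (hf : Measurable f) (hodd : ∀ x, f (-x) = -f x) : (μ.map f).IsNegInvariant := by
  refine ⟨?_⟩
  have hcomm : Neg.neg ∘ f = f ∘ Neg.neg := funext fun x => (hodd x).symm
  rw [Measure.neg, Measure.map_map measurable_neg hf, hcomm, ← Measure.map_map hf measurable_neg,
    ← Measure.neg, Measure.neg_eq_self]

instance isGaussian_stdGaussian_pi (ι : Type*) [Fintype ι] : IsGaussian (_root_.stdGaussian ι) := by
  have h : (ProbabilityTheory.stdGaussian (EuclideanSpace ℝ ι)).map (EuclideanSpace.equiv ι ℝ)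
      = _root_.stdGaussian ι := by
    rw [← map_pi_eq_stdGaussian, Measure.map_map (by fun_prop) (by fun_prop)]
    exact Measure.map_id
  rw [← h]
  infer_instance

instance isNegInvariant_stdGaussian_pi (ι : Type*) [Fintype ι] :
    (_root_.stdGaussian ι).IsNegInvariant := by
  unfold _root_.stdGaussian
  infer_instance

namespace IsCenteredGaussian

variable {ι : Type*} [Fintype ι] {C : Matrix ι ι ℝ} {μ : Measure (ι → ℝ)}

lemma isGaussian (h : IsCenteredGaussian C μ) : IsGaussian μ := by
  obtain ⟨A, -, rfl⟩ := h
  exact isGaussian_map (LinearMap.toContinuousLinearMap A.mulVecLin)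

lemma isNegInvariant (h : IsCenteredGaussian C μ) : μ.IsNegInvariant := by
  obtain ⟨A, -, rfl⟩ := h
  exact isNegInvariant_map (Continuous.measurable (by fun_prop)) fun x => mulVec_neg x A

end IsCenteredGaussian

section Symmetrization

variable {E : Type*} [MeasurableSpace E] [AddGroup E] [MeasurableNeg E] {μ : Measure E}
  [μ.IsNegInvariant]

lemma integral_eq_integral_half_add_comp_neg {f : E → ℝ} (hf : Integrable f μ) :
    ∫ x, f x ∂μ = ∫ x, (f x + f (-x)) / 2 ∂μ := by
  rw [integral_div, integral_add hf hf.comp_neg, integral_neg_eq_self]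
  ring

lemma covar_eq_covar_half_add_comp_neg {f g : E → ℝ} (hf : Integrable f μ)
    (hfg : Integrable (fun x => f x * g x) μ) (hg : ∀ x, g (-x) = g x) :
    covar μ f g = covar μ (fun x => (f x + f (-x)) / 2) g := by
  simp only [covar, expec]
  rw [integral_eq_integral_half_add_comp_neg hf, integral_eq_integral_half_add_comp_neg hfg]
  simp only [hg, add_mul, add_div, div_mul_eq_mul_div]

end Symmetrization

lemma covar_comp_nonpos_of_antitone {α : Type*} [MeasurableSpace α] {μ : Measure α}
    [IsProbabilityMeasure μ] {K : α → ℝ} {φ : ℝ → ℝ} (hφ : Antitone φ) (hK : Integrable K μ)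
    (hφK : Integrable (fun x => φ (K x)) μ) (hKφK : Integrable (fun x => K x * φ (K x)) μ) :
    covar μ K (fun x => φ (K x)) ≤ 0 := by
  set m := ∫ x, K x ∂μ
  have hpoint : ∀ x, (K x - m) * (φ (K x) - φ m) ≤ 0 := fun x => by
    rcases le_total (K x) m with h | h
    · exact mul_nonpos_of_nonpos_of_nonneg (sub_nonpos.2 h) (sub_nonneg.2 (hφ h))
    · exact mul_nonpos_of_nonneg_of_nonpos (sub_nonneg.2 h) (sub_nonpos.2 (hφ h))
  have hexpand : ∫ x, (K x - m) * (φ (K x) - φ m) ∂μ = covar μ K (fun x => φ (K x)) := by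
    simp only [sub_mul, mul_sub]
    have h₁ : Integrable (fun x => K x * φ (K x) - m * φ (K x)) μ := hKφK.sub (hφK.const_mul m)
    have h₂ : Integrable (fun x => K x * φ m - m * φ m) μ :=
      (hK.mul_const _).sub (integrable_const _)
    rw [integral_sub h₁ h₂, integral_sub hKφK (hφK.const_mul m),
      integral_sub (hK.mul_const _) (integrable_const _),
      integral_const_mul, integral_mul_const, integral_const]
    simp only [covar, expec, probReal_univ, one_smul, m]
    ring
  exact hexpand ▸ integral_nonpos hpoint

section SoftMax

variable {N : ℕ} (β : ℝ)

lemma measurable_S : Measurable (S (N := N) β) := by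
  unfold S; fun_prop

lemma measurable_p (i : Fin N) : Measurable (p β i) := by
  unfold p S; fun_prop

lemma exp_le_S (x : Fin N → ℝ) (i : Fin N) : Real.exp (β * x i) ≤ S β x :=
  Finset.single_le_sum (fun j _ => (Real.exp_pos (β * x j)).le) (Finset.mem_univ i)

lemma S_nonneg (x : Fin N → ℝ) : 0 ≤ S β x :=
  Finset.sum_nonneg fun _ _ => (Real.exp_pos _).le

lemma S_pos [NeZero N] (x : Fin N → ℝ) : 0 < S β x :=
  (Real.exp_pos _).trans_le (exp_le_S β x 0)

lemma p_nonneg (i : Fin N) (x : Fin N → ℝ) : 0 ≤ p β i x :=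
  div_nonneg (Real.exp_pos _).le (S_nonneg β x)

lemma p_le_one (i : Fin N) (x : Fin N → ℝ) : p β i x ≤ 1 :=
  div_le_one_of_le₀ (exp_le_S β x i) (S_nonneg β x)

lemma abs_log_S_le [NeZero N] (x : Fin N → ℝ) : |Real.log (S β x)| ≤ |β| * ‖x‖ + Real.log N := by
  have hterm : ∀ i, |β * x i| ≤ |β| * ‖x‖ := fun i => by
    rw [abs_mul, ← Real.norm_eq_abs (x i)]
    exact mul_le_mul_of_nonneg_left (norm_le_pi_norm x i) (abs_nonneg β)
  have hS := S_pos β x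
  have hlower : -(|β| * ‖x‖) ≤ Real.log (S β x) := by
    calc -(|β| * ‖x‖) ≤ β * x 0 := neg_le_of_abs_le (hterm 0)
      _ ≤ Real.log (S β x) := (Real.le_log_iff_exp_le hS).2 (exp_le_S β x 0)
  have hupper : S β x ≤ N * Real.exp (|β| * ‖x‖) := by
    calc S β x ≤ ∑ _i : Fin N, Real.exp (|β| * ‖x‖) :=
          Finset.sum_le_sum fun i _ => Real.exp_le_exp.2 (le_of_abs_le (hterm i))
      _ = N * Real.exp (|β| * ‖x‖) := by simp
  have hN : (0 : ℝ) < N := Nat.cast_pos.2 (Nat.pos_of_neZero N)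
  rw [abs_le]
  constructor
  · linarith [Real.log_nonneg (Nat.one_le_cast.2 (Nat.pos_of_neZero N))]
  · calc Real.log (S β x) ≤ Real.log (N * Real.exp (|β| * ‖x‖)) := Real.log_le_log hS hupper
      _ = |β| * ‖x‖ + Real.log N := by
        rw [Real.log_mul hN.ne' (Real.exp_pos _).ne', Real.log_exp, add_comm]

lemma integrable_log_S [NeZero N] {μ : Measure (Fin N → ℝ)} [IsFiniteMeasure μ]
    (hμ : Integrable (fun x => ‖x‖) μ) : Integrable (fun x => Real.log (S β x)) μ :=
  ((hμ.const_mul |β|).add (integrable_const _)).mono'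
    (measurable_S β).log.aestronglyMeasurable (ae_of_all _ fun x => abs_log_S_le β x)

lemma p_zero_mul_p_one (x : Fin 2 → ℝ) : p β 0 x * p β 1 x = (S β x * S β (-x))⁻¹ := by
  simp only [p, S, Fin.sum_univ_two, Pi.neg_apply, mul_neg, Real.exp_neg]
  field_simp
  ring

end SoftMax

theorem cov_logS_p1p2_bivariate_nonpos_general (C : Matrix (Fin 2) (Fin 2) ℝ)
    (μ : Measure (Fin 2 → ℝ)) (hμ : IsCenteredGaussian C μ) (β : ℝ) :
    covar μ (fun x => Real.log (S β x)) (fun x => p β 0 x * p β 1 x) ≤ 0 := by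
  have := hμ.isGaussian
  have := hμ.isNegInvariant
  set F : (Fin 2 → ℝ) → ℝ := fun x => Real.log (S β x)
  set H : (Fin 2 → ℝ) → ℝ := fun x => p β 0 x * p β 1 x
  have hF : Integrable F μ := integrable_log_S β IsGaussian.integrable_id.norm
  have hH_meas : AEStronglyMeasurable H μ :=
    ((measurable_p β 0).mul (measurable_p β 1)).aestronglyMeasurable
  have hH_le : ∀ᵐ x ∂μ, ‖H x‖ ≤ 1 := ae_of_all _ fun x => by
    rw [Real.norm_of_nonneg (mul_nonneg (p_nonneg β 0 x) (p_nonneg β 1 x))]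
    exact mul_le_one₀ (p_le_one β 0 x) (p_nonneg β 1 x) (p_le_one β 1 x)
  rw [covar_eq_covar_half_add_comp_neg hF (hF.mul_bdd hH_meas hH_le)
    fun x => by simp only [H, p_zero_mul_p_one, neg_neg, mul_comm]]
  set K : (Fin 2 → ℝ) → ℝ := fun x => (F x + F (-x)) / 2
  have hK : Integrable K μ := (hF.add hF.comp_neg).div_const 2
  have hKH : Integrable (fun x => K x * H x) μ := hK.mul_bdd hH_meas hH_le
  have hH_int : Integrable H μ := (integrable_const 1).mono' hH_meas hH_le
  have hH : H = fun x => Real.exp (-2 * K x) := funext fun x => by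
    rw [show -2 * K x = -(F x + F (-x)) by ring, Real.exp_neg, ← Real.log_mul
      (S_pos β x).ne' (S_pos β (-x)).ne', Real.exp_log (mul_pos (S_pos β x) (S_pos β (-x)))]
    exact p_zero_mul_p_one β x
  rw [hH] at hH_int hKH ⊢
  exact covar_comp_nonpos_of_antitone (fun a b hab => Real.exp_le_exp.2 (by linarith)) hK hH_int hKH

theorem cov_logS_p1p2_bivariate_nonpos (C : Matrix (Fin 2) (Fin 2) ℝ)
    (μ : Measure (Fin 2 → ℝ)) (hμ : IsCenteredGaussian C μ) (β : ℝ) (hβ : 0 < β) :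
    covar μ (fun x => Real.log (S β x)) (fun x => p β 0 x * p β 1 x) ≤ 0 :=
  cov_logS_p1p2_bivariate_nonpos_general C μ hμ β
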